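/- arXiv:1911.08320 — 4 statements merged into one kernel-verified Lean document; each statement's English description precedes it below -/
import Mathlib

section
/- Let S be a finite set of size n, and let φ be any function mapping subsets of S to a totally ordered set. For a subset R ⊆ S, define the violators V(R) = {s ∈ S \ R : φ(R ∪ {s}) ≠ φ(R)} and the extreme elements X(R) = {s ∈ R : φ(R) ≠ φ(R \ {s})}. Let v_r be the expected size of V(R) over uniformly random subsets R of size r, and x_{r+1} the expected size of X(Q) over uniformly random subsets Q of size r+1. Then for 0 ≤ r < n, v_r/(n−r) = x_{r+1}/(r+1). -/
/-!
A violator `s` of `R` and the set `Q = R ∪ {s}` are the same data as an extreme element `s` of `Q`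
together with `R = Q \ {s}`; so both sums count the same pairs. Dividing by the numbers of
`r`- and `(r+1)`-subsets gives the identity, since `C(n,r)(n-r) = C(n,r+1)(r+1)`.
-/

open Finset

section Sampling

variable {α β : Type*} [DecidableEq α] [DecidableEq β]

def violators (φ : Finset α → β) (S R : Finset α) : Finset α :=
  (S \ R).filter fun s => φ (insert s R) ≠ φ R

def extremes (φ : Finset α → β) (Q : Finset α) : Finset α :=
  Q.filter fun s => φ Q ≠ φ (Q.erase s)

theorem sum_card_violators_eq_sum_card_extremes (φ : Finset α → β) (S : Finset α) (r : ℕ) :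
    ∑ R ∈ S.powersetCard r, #(violators φ S R) =
      ∑ Q ∈ S.powersetCard (r + 1), #(extremes φ Q) := by
  simp only [← card_sigma]
  refine card_nbij' (fun p => ⟨insert p.2 p.1, p.2⟩) (fun p => ⟨p.1.erase p.2, p.2⟩)
    ?_ ?_ ?_ ?_
  · rintro ⟨R, s⟩ hp
    simp only [coe_sigma, Set.mem_sigma_iff, mem_coe, mem_powersetCard, violators, extremes,
      mem_filter, mem_sdiff] at hp ⊢
    obtain ⟨⟨hRS, rfl⟩, ⟨hsS, hsR⟩, hφ⟩ := hp
    exact ⟨⟨insert_subset hsS hRS, card_insert_of_notMem hsR⟩, mem_insert_self s R,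
      by rwa [erase_insert hsR]⟩
  · rintro ⟨Q, s⟩ hp
    simp only [coe_sigma, Set.mem_sigma_iff, mem_coe, mem_powersetCard, violators, extremes,
      mem_filter, mem_sdiff] at hp ⊢
    obtain ⟨⟨hQS, hQc⟩, hsQ, hφ⟩ := hp
    exact ⟨⟨(erase_subset s Q).trans hQS, by rw [card_erase_of_mem hsQ, hQc]; rfl⟩,
      ⟨hQS hsQ, notMem_erase s Q⟩, by rwa [insert_erase hsQ]⟩
  · rintro ⟨R, s⟩ hp
    simp only [coe_sigma, Set.mem_sigma_iff, mem_coe, violators, mem_filter, mem_sdiff] at hp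
    simp [erase_insert hp.2.1.2]
  · rintro ⟨Q, s⟩ hp
    simp only [coe_sigma, Set.mem_sigma_iff, mem_coe, extremes, mem_filter] at hp
    simp [insert_erase hp.2.1]

end Sampling

theorem Nat.cast_choose_mul_sub {R : Type*} [CommRing R] (n r : ℕ) :
    (n.choose r : R) * (n - r) = n.choose (r + 1) * (r + 1) := by
  rcases le_or_gt r n with hrn | hnr
  · have h := congrArg (Nat.cast (R := R)) (n.choose_succ_right_eq r)
    push_cast [Nat.cast_sub hrn] at h
    exact h.symm
  · simp [Nat.choose_eq_zero_of_lt hnr, Nat.choose_eq_zero_of_lt (hnr.trans r.lt_succ_self)]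

theorem sampling_lemma_general {α β : Type*} [DecidableEq α] [DecidableEq β]
    (S : Finset α) (n : ℕ) (φ : Finset α → β)
    (r : ℕ) :
    ((∑ R ∈ S.powersetCard r,
        (((S \ R).filter (fun s => φ (insert s R) ≠ φ R)).card : ℝ)) / (n.choose r))
      / ((n : ℝ) - r) =
    ((∑ Q ∈ S.powersetCard (r + 1),
        ((Q.filter (fun s => φ Q ≠ φ (Q.erase s))).card : ℝ)) / (n.choose (r + 1)))
      / ((r : ℝ) + 1) := by
  rw [div_div, div_div, Nat.cast_choose_mul_sub]
  congr 1
  exact_mod_cast sum_card_violators_eq_sum_card_extremes φ S r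

/-- Sampling Lemma: v_r/(n-r) = x_{r+1}/(r+1), where v_r (resp. x_{r+1}) is the
expected number of violators (resp. extreme elements) of a uniformly random
subset of size r (resp. r+1). -/
theorem sampling_lemma {α β : Type*} [DecidableEq α] [DecidableEq β]
    (S : Finset α) (n : ℕ) (hn : S.card = n) (φ : Finset α → β)
    (r : ℕ) (hr : r < n) :
    ((∑ R ∈ S.powersetCard r,
        (((S \ R).filter (fun s => φ (insert s R) ≠ φ R)).card : ℝ)) / (n.choose r))
      / ((n : ℝ) - r) =
    ((∑ Q ∈ S.powersetCard (r + 1),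
        ((Q.filter (fun s => φ Q ≠ φ (Q.erase s))).card : ℝ)) / (n.choose (r + 1)))
      / ((r : ℝ) + 1) :=
  sampling_lemma_general S n φ r
end

section
/- Let (S, φ) be an LP-Type problem of dimension δ (every basis has size at most δ). Then for every subset R ⊆ S, the number of extreme elements of R is at most δ, i.e., |{s ∈ R : φ(R \ {s}) ≠ φ(R)}| ≤ δ. -/
open Finset

/-- In an LP-Type problem of dimension δ, every subset R ⊆ S has at most δ
extreme elements. -/
theorem card_extreme_le_dim {α β : Type*} [DecidableEq α] [DecidableEq β] [LinearOrder β]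
    (S : Finset α) (φ : Finset α → β) (δ : ℕ)
    (hmono : ∀ A B : Finset α, A ⊆ B → φ A ≤ φ B)
    (hloc : ∀ (A B : Finset α) (x : α), A ⊆ B → φ A = φ B →
      φ A = φ (insert x A) → φ A = φ (insert x B))
    (hdim : ∀ B : Finset α, B ⊆ S → (∀ B' : Finset α, B' ⊂ B → φ B' < φ B) →
      B.card ≤ δ) :
    ∀ R : Finset α, R ⊆ S →
      (R.filter (fun s => φ (R.erase s) ≠ φ R)).card ≤ δ := by
  intro R hRS
  -- choose a minimal-cardinality subset B of R with φ B = φ R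
  have hne : (R.powerset.filter (fun B => φ B = φ R)).Nonempty :=
    ⟨R, by simp⟩
  obtain ⟨B, hBmem, hBmin⟩ :=
    (R.powerset.filter (fun B => φ B = φ R)).exists_min_image Finset.card hne
  simp only [mem_filter, mem_powerset] at hBmem
  obtain ⟨hBR, hBφ⟩ := hBmem
  -- B is a basis
  have hbasis : ∀ B' : Finset α, B' ⊂ B → φ B' < φ B := by
    intro B' hB'
    have hle : φ B' ≤ φ B := hmono _ _ hB'.subset
    rcases lt_or_eq_of_le hle with h | h
    · exact h
    · exfalso
      have := hBmin B' (by
        simp only [mem_filter, mem_powerset]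
        exact ⟨hB'.subset.trans hBR, h ▸ hBφ⟩)
      exact absurd this (not_le.mpr (Finset.card_lt_card hB'))
  have hcard : B.card ≤ δ := hdim B (hBR.trans hRS) hbasis
  refine le_trans (Finset.card_le_card ?_) hcard
  intro s hs
  simp only [mem_filter] at hs
  obtain ⟨hsR, hsφ⟩ := hs
  by_contra hsB
  have hBe : B ⊆ R.erase s := Finset.subset_erase.mpr ⟨hBR, hsB⟩
  exact hsφ (le_antisymm (hmono _ _ (erase_subset _ _)) (hBφ ▸ hmono _ _ hBe))
end

section
/- Let (S, φ) be an LP-Type problem with at least ε|S| constraints needing removal for φ to drop to at most k (i.e., for every T ⊆ S with |T| < ε|S|, φ(S \ T) > k). Then for every subset R ⊆ S with φ(R) ≤ k, there are at least ε|S| elements x ∈ S \ R with φ(R ∪ {x}) ≠ φ(R). -/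
open Finset

lemma union_nonviolators {α β : Type*} [DecidableEq α] (φ : Finset α → β)
    (hloc : ∀ (A B : Finset α) (x : α), A ⊆ B → φ A = φ B →
      φ A = φ (insert x A) → φ A = φ (insert x B))
    (R : Finset α) :
    ∀ N : Finset α, (∀ x ∈ N, φ (insert x R) = φ R) → φ (R ∪ N) = φ R := by
  intro N
  induction N using Finset.induction_on with
  | empty => simp
  | @insert a N' _ ih =>
    intro h
    have hIH : φ (R ∪ N') = φ R := ih (fun x hxm => h x (mem_insert_of_mem hxm))
    have ha : φ (insert a R) = φ R := h a (mem_insert_self a N')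
    have := hloc R (R ∪ N') a subset_union_left hIH.symm ha.symm
    rw [Finset.union_insert, ← this]

/-- Soundness step of the LP-Type tester: if S is ε-far from φ(S) ≤ k, then
every R ⊆ S with φ(R) ≤ k has at least ε|S| violators. -/
theorem soundness_many_violators {α β : Type*} [DecidableEq α] [DecidableEq β] [LinearOrder β]
    (S : Finset α) (φ : Finset α → β)
    (hmono : ∀ A B : Finset α, A ⊆ B → φ A ≤ φ B)
    (hloc : ∀ (A B : Finset α) (x : α), A ⊆ B → φ A = φ B →
      φ A = φ (insert x A) → φ A = φ (insert x B))
    (k : β) (ε : ℝ) (hε : 0 < ε) (hε1 : ε ≤ 1)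
    (hfar : ∀ T : Finset α, T ⊆ S → (T.card : ℝ) < ε * S.card → k < φ (S \ T)) :
    ∀ R : Finset α, R ⊆ S → φ R ≤ k →
      ε * S.card ≤ (((S \ R).filter (fun x => φ (insert x R) ≠ φ R)).card : ℝ) := by
  intro R hRS hRk
  by_contra hlt
  push_neg at hlt
  set V := (S \ R).filter (fun x => φ (insert x R) ≠ φ R) with hV
  set N := (S \ R).filter (fun x => φ (insert x R) = φ R) with hN
  have hVS : V ⊆ S := (filter_subset _ _).trans (sdiff_subset)
  have hkey := hfar V hVS hlt
  have hSV : S \ V = R ∪ N := by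
    ext x
    simp only [hV, hN, mem_sdiff, mem_filter, mem_union, not_and, not_not]
    constructor
    · rintro ⟨hxS, hx⟩
      by_cases hxR : x ∈ R
      · exact Or.inl hxR
      · exact Or.inr ⟨⟨hxS, hxR⟩, hx ⟨hxS, hxR⟩⟩
    · rintro (hxR | ⟨⟨hxS, hxR⟩, heq⟩)
      · exact ⟨hRS hxR, fun h => absurd hxR h.2⟩
      · exact ⟨hxS, fun _ => heq⟩
  have hφ : φ (S \ V) = φ R := by
    rw [hSV]
    exact union_nonviolators φ hloc R N (fun x hx => (mem_filter.mp hx).2)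
  rw [hφ] at hkey
  exact absurd hRk (not_le.mpr hkey)
end

section
/- Let P be a real polynomial of degree at most d, and let points x_i = i for i = 1, …, 3d+1 be labeled with labels ℓ_i ∈ {−1, +1}. Say index i is 'correct' if sign(P(i)) = ℓ_i. If ℓ_i = (−1)^i for all i except at most k indices whose labels are flipped, and P correctly classifies all points (sign(P(i)) matches the (possibly flipped) label for every i), then k ≥ d. -/
open Finset

lemma exists_root_between_aux (P : Polynomial ℝ) (a b : ℝ) (hab : a < b)
    (h : P.eval a * P.eval b < 0) : ∃ x ∈ Set.Ioo a b, P.eval x = 0 := by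
  rcases lt_or_ge (P.eval a) 0 with ha | ha
  · have hb : 0 < P.eval b := by nlinarith
    have := intermediate_value_Ioo hab.le (P.continuousOn (s := Set.Icc a b))
    have h0 : (0 : ℝ) ∈ Set.Ioo (P.eval a) (P.eval b) := ⟨ha, hb⟩
    obtain ⟨x, hx, hx0⟩ := this h0
    exact ⟨x, hx, hx0⟩
  · have ha' : 0 < P.eval a := by
      rcases ha.eq_or_lt with h0 | h0
      · exfalso; rw [← h0] at h; simp at h
      · exact h0
    have hb : P.eval b < 0 := by nlinarith
    have := intermediate_value_Ioo' hab.le (P.continuousOn (s := Set.Icc a b))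
    have h0 : (0 : ℝ) ∈ Set.Ioo (P.eval b) (P.eval a) := ⟨hb, ha'⟩
    obtain ⟨x, hx, hx0⟩ := this h0
    exact ⟨x, hx, hx0⟩

/-- If a degree-≤-d polynomial correctly classifies the points 1,…,3d+1 carrying
the alternating labels (−1)^i flipped on a set F of indices, then |F| ≥ d. -/
theorem flips_ge_d (d : ℕ) (P : Polynomial ℝ) (hdeg : P.natDegree ≤ d)
    (F : Finset ℕ) (hF : F ⊆ Finset.Icc 1 (3 * d + 1))
    (hcorrect : ∀ i ∈ Finset.Icc 1 (3 * d + 1),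
      0 < ((-1 : ℝ) ^ i * (if i ∈ F then -1 else 1)) * P.eval (i : ℝ)) :
    d ≤ F.card := by
  classical
  have h1 := hcorrect 1 (by simp)
  have hP0 : P ≠ 0 := by
    intro h; rw [h] at h1; simp at h1
  set p : ℕ → Prop := fun i => P.eval (i : ℝ) * P.eval ((i : ℝ) + 1) < 0 with hp
  set S : Finset ℕ := (Finset.Icc 1 (3 * d)).filter p with hS
  set T : Finset ℕ := (Finset.Icc 1 (3 * d)).filter (fun i => ¬ p i) with hT
  -- each i ∈ S gives a root in (i, i+1)
  have hroot : ∀ i ∈ S, ∃ x ∈ Set.Ioo (i : ℝ) ((i : ℝ) + 1), P.eval x = 0 := by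
    intro i hi
    rw [hS, Finset.mem_filter] at hi
    exact exists_root_between_aux P _ _ (by linarith) hi.2
  set f : ℕ → ℝ := fun i =>
    if h : ∃ x ∈ Set.Ioo (i : ℝ) ((i : ℝ) + 1), P.eval x = 0 then h.choose else 0 with hf
  have hfmem : ∀ i ∈ S, f i ∈ Set.Ioo (i : ℝ) ((i : ℝ) + 1) ∧ P.eval (f i) = 0 := by
    intro i hi
    have h := hroot i hi
    simp only [hf, dif_pos h]
    exact ⟨h.choose_spec.1, h.choose_spec.2⟩
  have hScard : S.card ≤ d := by
    have hinj : Set.InjOn f S := by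
      intro i hi j hj hij
      by_contra hne
      rcases lt_or_gt_of_ne hne with hlt | hlt
      · have h1 := (hfmem i hi).1
        have h2 := (hfmem j hj).1
        have : (i : ℝ) + 1 ≤ (j : ℝ) := by exact_mod_cast Nat.succ_le_of_lt hlt
        have : f i < f j := lt_of_lt_of_le h1.2 (le_trans this h2.1.le)
        exact this.ne hij
      · have h1 := (hfmem i hi).1
        have h2 := (hfmem j hj).1
        have : (j : ℝ) + 1 ≤ (i : ℝ) := by exact_mod_cast Nat.succ_le_of_lt hlt
        have : f j < f i := lt_of_lt_of_le h2.2 (le_trans this h1.1.le)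
        exact this.ne hij.symm
    have hmap : ∀ i ∈ S, f i ∈ P.roots.toFinset := by
      intro i hi
      rw [Multiset.mem_toFinset, Polynomial.mem_roots hP0]
      exact (hfmem i hi).2
    calc S.card ≤ P.roots.toFinset.card := Finset.card_le_card_of_injOn f hmap hinj
      _ ≤ Multiset.card P.roots := Multiset.toFinset_card_le _
      _ ≤ P.natDegree := Polynomial.card_roots' P
      _ ≤ d := hdeg
  -- each i ∈ T has i ∈ F or i+1 ∈ F
  have hTF : ∀ i ∈ T, i ∈ F ∨ i + 1 ∈ F := by
    intro i hi
    rw [hT, Finset.mem_filter, Finset.mem_Icc] at hi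
    by_contra hc
    push_neg at hc
    have hi1 : i ∈ Finset.Icc 1 (3 * d + 1) := Finset.mem_Icc.mpr ⟨hi.1.1, by omega⟩
    have hi2 : i + 1 ∈ Finset.Icc 1 (3 * d + 1) := Finset.mem_Icc.mpr ⟨by omega, by omega⟩
    have ha := hcorrect i hi1
    have hb := hcorrect (i + 1) hi2
    rw [if_neg hc.1] at ha
    rw [if_neg hc.2] at hb
    push_cast at hb
    rw [pow_succ] at hb
    apply hi.2
    rw [hp]
    rcases Nat.even_or_odd i with he | ho
    · rw [he.neg_one_pow] at ha hb
      nlinarith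
    · rw [ho.neg_one_pow] at ha hb
      nlinarith
  have hTcard : T.card ≤ 2 * F.card := by
    have hsub : T ⊆ F ∪ F.image (· - 1) := by
      intro i hi
      rcases hTF i hi with h | h
      · exact Finset.mem_union_left _ h
      · refine Finset.mem_union_right _ ?_
        exact Finset.mem_image.mpr ⟨i + 1, h, by omega⟩
    calc T.card ≤ (F ∪ F.image (· - 1)).card := Finset.card_le_card hsub
      _ ≤ F.card + (F.image (· - 1)).card := Finset.card_union_le _ _
      _ ≤ F.card + F.card := Nat.add_le_add_left Finset.card_image_le _
      _ = 2 * F.card := by ring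
  have hsum : S.card + T.card = 3 * d := by
    rw [hS, hT, Finset.card_filter_add_card_filter_not, Nat.card_Icc]
    omega
  omega
end
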